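/- (Abstract Bahadur representation.) Let H_x and H_z be real Hilbert spaces; let S, Ŝ : H_x → H_z be bounded operators; let S_z, Ŝ_z be bounded positive self-adjoint operators on H_z; let μ, λ > 0; let h₀ ∈ H_x, e ∈ H_z; and let κ ≥ ‖S‖. Define T_μ := S*(S_z + μI)⁻¹S, T_{μ,λ} := T_μ + λI, T̂_μ := Ŝ*(Ŝ_z + μI)⁻¹Ŝ, T̂_{μ,λ} := T̂_μ + λI, h_{μ,λ} := T_{μ,λ}⁻¹ T_μ h₀, ĥ := T̂_{μ,λ}⁻¹ Ŝ*(Ŝ_z + μI)⁻¹(Ŝ h₀ + e), and Ū := T_{μ,λ}⁻¹ { S*(S_z + μI)⁻¹(Ŝ − S) + (Ŝ − S)*(S_z + μI)⁻¹S + S*(S_z + μI)⁻¹(S_z − Ŝ_z)(S_z + μI)⁻¹S } (h₀ − h_{μ,λ}) + T_{μ,λ}⁻¹ S*(S_z + μI)⁻¹ e. Assume: ‖T_{μ,λ}⁻¹ Ŝ*(Ŝ_z + μI)⁻¹ e‖ ≤ γ; ‖(S_z + μI)⁻¹(Ŝ_z − S_z)‖ ≤ δ_z with δ_z ≤ 1/2;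 ‖T_{μ,λ}⁻¹(T̂_μ − T_μ)‖ ≤ δ with δ ≤ 1/2; ‖T_{μ,λ}⁻¹(Ŝ − S)*(Ŝ_z + μI)⁻¹ e‖ ≤ γ₁; ‖Ŝ − S‖ ≤ γ̃₁; and ‖T_{μ,λ}⁻¹ S*((Ŝ_z + μI)⁻¹ − (S_z + μI)⁻¹) e‖ ≤ ξ₁. Then ‖ĥ − h_{μ,λ} − Ū‖ ≤ 2δγ + γ₁ + ξ₁ + (2δ² + R)·‖h₀ − h_{μ,λ}‖, where R := (δ_z/√(λμ))·(δ_z(κ + γ̃₁) + γ̃₁/2) + (γ̃₁/(λμ))·(γ̃₁ + δ_z(1 + 2δ_z)(κ + γ̃₁)). -/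

import Mathlib

set_option linter.unusedSectionVars false
set_option maxHeartbeats 4000000
set_option synthInstance.maxHeartbeats 400000

open ContinuousLinearMap
open RealInnerProductSpace

section BahadurAux

variable {H : Type*} [NormedAddCommGroup H] [InnerProductSpace ℝ H] [CompleteSpace H]

lemma bahadur_ring_inverse_eq {R : Type*} [MonoidWithZero R] (a b : R)
    (h1 : a * b = 1) (h2 : b * a = 1) : Ring.inverse a = b :=
  Ring.inverse_unit ⟨a, b, h1, h2⟩

lemma bahadur_coercive_below (A : H →L[ℝ] H) (μ : ℝ)
    (hc : ∀ u, μ * ‖u‖ ^ 2 ≤ ⟪A u, u⟫) : ∀ u, μ * ‖u‖ ≤ ‖A u‖ := by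
  intro u
  rcases (norm_nonneg u).eq_or_lt with h | h
  · have : u = 0 := by simpa using h.symm
    simp [this]
  · have h1 := hc u
    have h2 := real_inner_le_norm (A u) u
    nlinarith [norm_nonneg (A u)]

lemma bahadur_coercive_isUnit (A : H →L[ℝ] H) (μ : ℝ) (hμ : 0 < μ)
    (hc : ∀ u, μ * ‖u‖ ^ 2 ≤ ⟪A u, u⟫) : IsUnit A := by
  have hbelow := bahadur_coercive_below A μ hc
  have hanti : AntilipschitzWith (μ⁻¹).toNNReal A := by
    refine ContinuousLinearMap.antilipschitz_of_bound A fun u => ?_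
    rw [Real.coe_toNNReal _ (inv_pos.mpr hμ).le, inv_mul_eq_div, le_div_iff₀ hμ]
    nlinarith [hbelow u]
  have hker : LinearMap.ker (A : H →ₗ[ℝ] H) = ⊥ := LinearMap.ker_eq_bot.mpr hanti.injective
  have hclosed : IsClosed (LinearMap.range (A : H →ₗ[ℝ] H) : Set H) := by
    rw [LinearMap.coe_range]; exact hanti.isClosed_range A.uniformContinuous
  have hrange : LinearMap.range (A : H →ₗ[ℝ] H) = ⊤ := by
    haveI := hclosed.completeSpace_coe
    rw [← (LinearMap.range (A : H →ₗ[ℝ] H)).orthogonal_orthogonal, Submodule.eq_top_iff']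
    intro v
    rw [Submodule.mem_orthogonal]
    intro w hw
    have h1 : ⟪A w, w⟫ = 0 := hw (A w) ⟨w, rfl⟩
    have h2 := hc w
    have hw0 : w = 0 := by
      have h3 : ‖w‖ ^ 2 = 0 := le_antisymm (by nlinarith) (sq_nonneg _)
      have h4 : ‖w‖ = 0 := (pow_eq_zero_iff two_ne_zero).mp h3
      simpa using h4
    simp [hw0]
  let E := ContinuousLinearEquiv.ofBijective A hker hrange
  have hE : ∀ x, E x = A x := fun x => rfl
  refine ⟨⟨A, E.symm.toContinuousLinearMap, ?_, ?_⟩, rfl⟩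
  · ext x
    have : A (E.symm x) = E (E.symm x) := (hE _).symm
    simpa [ContinuousLinearMap.mul_apply] using this
  · ext x
    have : E.symm (A x) = E.symm (E x) := by rw [hE]
    simpa [ContinuousLinearMap.mul_apply] using this

lemma bahadur_apply_ring_inverse_cancel (A : H →L[ℝ] H) (hA : IsUnit A) (w : H) :
    A (Ring.inverse A w) = w := by
  have h := Ring.mul_inverse_cancel A hA
  calc A (Ring.inverse A w) = (A * Ring.inverse A) w := rfl
  _ = w := by rw [h]; rfl

lemma bahadur_ring_inverse_apply_cancel (A : H →L[ℝ] H) (hA : IsUnit A) (w : H) :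
    Ring.inverse A (A w) = w := by
  have h := Ring.inverse_mul_cancel A hA
  calc Ring.inverse A (A w) = (Ring.inverse A * A) w := rfl
  _ = w := by rw [h]; rfl

lemma bahadur_ring_inverse_norm_le (A : H →L[ℝ] H) (hA : IsUnit A) (μ : ℝ) (hμ : 0 < μ)
    (hbelow : ∀ u, μ * ‖u‖ ≤ ‖A u‖) : ‖Ring.inverse A‖ ≤ μ⁻¹ := by
  refine ContinuousLinearMap.opNorm_le_bound _ (inv_pos.mpr hμ).le fun u => ?_
  have h1 := hbelow (Ring.inverse A u)
  rw [bahadur_apply_ring_inverse_cancel A hA] at h1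
  rw [inv_mul_eq_div, le_div_iff₀ hμ]
  nlinarith

lemma bahadur_neumann_isUnit (x : H →L[ℝ] H) (hx : ‖x‖ ≤ 1 / 2) : IsUnit (1 + x) := by
  have hx1 : ‖-x‖ < 1 := by rw [norm_neg]; linarith
  refine ⟨Units.oneSub (-x) hx1, ?_⟩
  show 1 - -x = 1 + x
  rw [sub_neg_eq_add]

lemma bahadur_neumann_inverse_norm (x : H →L[ℝ] H) (hx : ‖x‖ ≤ 1 / 2) :
    ‖Ring.inverse (1 + x)‖ ≤ 2 := by
  have hu := bahadur_neumann_isUnit x hx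
  set y := Ring.inverse (1 + x) with hy
  have h1 : (1 + x) * y = 1 := Ring.mul_inverse_cancel _ hu
  have h2 : y = 1 - x * y := by
    rw [add_mul, one_mul] at h1
    exact eq_sub_of_add_eq h1
  have h3 : ‖y‖ ≤ ‖(1 : H →L[ℝ] H)‖ + ‖x‖ * ‖y‖ := by
    calc ‖y‖ = ‖1 - x * y‖ := by rw [← h2]
    _ ≤ ‖(1 : H →L[ℝ] H)‖ + ‖x * y‖ := norm_sub_le _ _
    _ ≤ ‖(1 : H →L[ℝ] H)‖ + ‖x‖ * ‖y‖ := by gcongr; exact norm_mul_le x y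
  have h4 : ‖(1 : H →L[ℝ] H)‖ ≤ 1 := ContinuousLinearMap.norm_id_le
  nlinarith [norm_nonneg y]

variable {Hx : Type*} [NormedAddCommGroup Hx] [InnerProductSpace ℝ Hx] [CompleteSpace Hx]

lemma bahadur_sand_add (X Y : Hx →L[ℝ] H) (Q Q' : H →L[ℝ] H) :
    adjoint X ∘L ((Q + Q') ∘L Y) = adjoint X ∘L (Q ∘L Y) + adjoint X ∘L (Q' ∘L Y) := by
  ext x
  simp [ContinuousLinearMap.comp_apply, ContinuousLinearMap.add_apply]

lemma bahadur_sand_sub (X Y : Hx →L[ℝ] H) (Q Q' : H →L[ℝ] H) :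
    adjoint X ∘L ((Q - Q') ∘L Y) = adjoint X ∘L (Q ∘L Y) - adjoint X ∘L (Q' ∘L Y) := by
  ext x
  simp [ContinuousLinearMap.comp_apply, ContinuousLinearMap.sub_apply]

lemma bahadur_norm_comp3_le {E F G K : Type*} [NormedAddCommGroup E] [NormedSpace ℝ E]
    [NormedAddCommGroup F] [NormedSpace ℝ F] [NormedAddCommGroup G] [NormedSpace ℝ G]
    [NormedAddCommGroup K] [NormedSpace ℝ K]
    (a : G →L[ℝ] K) (b : F →L[ℝ] G) (c : E →L[ℝ] F) :
    ‖a ∘L (b ∘L c)‖ ≤ ‖a‖ * ‖b‖ * ‖c‖ := by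
  refine (ContinuousLinearMap.opNorm_comp_le _ _).trans ?_
  rw [mul_assoc]
  exact mul_le_mul_of_nonneg_left (ContinuousLinearMap.opNorm_comp_le b c) (norm_nonneg a)

lemma bahadur_norm_mul3_le {R : Type*} [NonUnitalSeminormedRing R] (a b c : R) :
    ‖a * b * c‖ ≤ ‖a‖ * ‖b‖ * ‖c‖ := by
  refine (norm_mul_le _ _).trans ?_
  exact mul_le_mul_of_nonneg_right (norm_mul_le a b) (norm_nonneg c)

lemma bahadur_scalar (κ g dz lam μ s : ℝ) (hκ : 0 ≤ κ) (hg : 0 ≤ g) (hdz : 0 ≤ dz)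
    (hlam : 0 < lam) (hμ : 0 < μ) (hs : 0 < s) (hss : s ^ 2 = lam * μ) :
    (2*s)⁻¹ * (2*dz*dz) * κ
      + ((2*s)⁻¹ * dz * g + lam⁻¹ * κ * (dz*(dz*μ⁻¹)*g))
      + lam⁻¹ * g * ((μ⁻¹*dz)*κ)
      + lam⁻¹ * g * (μ⁻¹*g)
    ≤ dz / s * (dz*(κ+g) + g/2) + g / (lam*μ) * (g + dz*(1+2*dz)*(κ+g)) := by
  have h1 : dz / s * (dz*(κ+g)+g/2) - ((2*s)⁻¹*(2*dz*dz)*κ + (2*s)⁻¹*dz*g)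
      = dz*dz*g/s := by
    field_simp
    ring
  have h2 : g/(lam*μ)*(g + dz*(1+2*dz)*(κ+g))
      - (lam⁻¹*κ*(dz*(dz*μ⁻¹)*g) + lam⁻¹*g*((μ⁻¹*dz)*κ) + lam⁻¹*g*(μ⁻¹*g))
      = (dz*g*g + 2*dz*dz*g*g + dz*dz*κ*g)/(lam*μ) := by
    field_simp
    ring
  have p1 : 0 ≤ dz*dz*g/s := by positivity
  have p2 : 0 ≤ (dz*g*g + 2*dz*dz*g*g + dz*dz*κ*g)/(lam*μ) := by positivity
  linarith

end BahadurAux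

/-- **Abstract Bahadur representation.**
Let `H_x, H_z` be real Hilbert spaces; `S, Ŝ : H_x → H_z` bounded operators;
`S_z, Ŝ_z` bounded positive self-adjoint operators on `H_z`; `μ, λ > 0`;
`h₀ ∈ H_x`, `e ∈ H_z`; and `κ ≥ ‖S‖`.  Define
`T_μ := S*(S_z + μI)⁻¹S`, `T_{μ,λ} := T_μ + λI`,
`T̂_μ := Ŝ*(Ŝ_z + μI)⁻¹Ŝ`, `T̂_{μ,λ} := T̂_μ + λI`,
`h_{μ,λ} := T_{μ,λ}⁻¹ T_μ h₀`, `ĥ := T̂_{μ,λ}⁻¹ Ŝ*(Ŝ_z + μI)⁻¹(Ŝ h₀ + e)`, and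
`Ū := T_{μ,λ}⁻¹ { S*(S_z + μI)⁻¹(Ŝ − S) + (Ŝ − S)*(S_z + μI)⁻¹S
      + S*(S_z + μI)⁻¹(S_z − Ŝ_z)(S_z + μI)⁻¹S } (h₀ − h_{μ,λ})
      + T_{μ,λ}⁻¹ S*(S_z + μI)⁻¹ e`.
Assume `‖T_{μ,λ}⁻¹ Ŝ*(Ŝ_z + μI)⁻¹ e‖ ≤ γ`;
`‖(S_z + μI)⁻¹(Ŝ_z − S_z)‖ ≤ δ_z ≤ 1/2`;
`‖T_{μ,λ}⁻¹(T̂_μ − T_μ)‖ ≤ δ ≤ 1/2`;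
`‖T_{μ,λ}⁻¹(Ŝ − S)*(Ŝ_z + μI)⁻¹ e‖ ≤ γ₁`; `‖Ŝ − S‖ ≤ γ̃₁`; and
`‖T_{μ,λ}⁻¹ S*((Ŝ_z + μI)⁻¹ − (S_z + μI)⁻¹) e‖ ≤ ξ₁`.  Then
`‖ĥ − h_{μ,λ} − Ū‖ ≤ 2δγ + γ₁ + ξ₁ + (2δ² + R)‖h₀ − h_{μ,λ}‖`, where
`R := (δ_z/√(λμ))(δ_z(κ + γ̃₁) + γ̃₁/2) + (γ̃₁/(λμ))(γ̃₁ + δ_z(1 + 2δ_z)(κ + γ̃₁))`. -/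
theorem abstract_bahadur_representation
    {Hx Hz : Type*} [NormedAddCommGroup Hx] [InnerProductSpace ℝ Hx] [CompleteSpace Hx]
    [NormedAddCommGroup Hz] [InnerProductSpace ℝ Hz] [CompleteSpace Hz]
    (S Shat : Hx →L[ℝ] Hz) (Sz Szhat : Hz →L[ℝ] Hz)
    (hSz : Sz.IsPositive) (hSzhat : Szhat.IsPositive)
    (μ lam : ℝ) (hμ : 0 < μ) (hlam : 0 < lam)
    (h₀ : Hx) (e : Hz)
    (κ γ δz δ γ₁ γtilde₁ ξ₁ : ℝ) (hκ : ‖S‖ ≤ κ)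
    -- the regularized inverses
    (Rz : Hz →L[ℝ] Hz) (hRz : Rz = Ring.inverse (Sz + μ • (1 : Hz →L[ℝ] Hz)))
    (Rzhat : Hz →L[ℝ] Hz)
    (hRzhat : Rzhat = Ring.inverse (Szhat + μ • (1 : Hz →L[ℝ] Hz)))
    -- population and empirical operators
    (Tμ : Hx →L[ℝ] Hx) (hTμ : Tμ = ContinuousLinearMap.adjoint S ∘L Rz ∘L S)
    (Tmullam : Hx →L[ℝ] Hx) (h_Tmullam : Tmullam = Tμ + lam • (1 : Hx →L[ℝ] Hx))
    (Tμhat : Hx →L[ℝ] Hx)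
    (hTμhat : Tμhat = ContinuousLinearMap.adjoint Shat ∘L Rzhat ∘L Shat)
    (Tmullamhat : Hx →L[ℝ] Hx) (h_Tmullamhat : Tmullamhat = Tμhat + lam • (1 : Hx →L[ℝ] Hx))
    -- population solution, estimator and influence term
    (hmullam : Hx) (h_hmullam : hmullam = Ring.inverse Tmullam (Tμ h₀))
    (hhat : Hx)
    (hhhat : hhat = Ring.inverse Tmullamhat
      ((ContinuousLinearMap.adjoint Shat ∘L Rzhat) (Shat h₀ + e)))
    (Ubar : Hx)
    (hUbar : Ubar =
      Ring.inverse Tmullam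
        ((ContinuousLinearMap.adjoint S ∘L Rz ∘L (Shat - S)
          + ContinuousLinearMap.adjoint (Shat - S) ∘L Rz ∘L S
          + ContinuousLinearMap.adjoint S ∘L Rz ∘L (Sz - Szhat) ∘L Rz ∘L S)
          (h₀ - hmullam))
      + (Ring.inverse Tmullam ∘L ContinuousLinearMap.adjoint S ∘L Rz) e)
    -- the high-probability events
    (hγ : ‖(Ring.inverse Tmullam ∘L ContinuousLinearMap.adjoint Shat ∘L Rzhat) e‖ ≤ γ)
    (hδz : ‖Rz ∘L (Szhat - Sz)‖ ≤ δz) (hδz2 : δz ≤ 1 / 2)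
    (hδ : ‖Ring.inverse Tmullam ∘L (Tμhat - Tμ)‖ ≤ δ) (hδ2 : δ ≤ 1 / 2)
    (hγ₁ : ‖(Ring.inverse Tmullam ∘L ContinuousLinearMap.adjoint (Shat - S) ∘L Rzhat) e‖ ≤ γ₁)
    (hγtilde₁ : ‖Shat - S‖ ≤ γtilde₁)
    (hξ₁ : ‖(Ring.inverse Tmullam ∘L ContinuousLinearMap.adjoint S ∘L (Rzhat - Rz)) e‖ ≤ ξ₁) :
    ‖hhat - hmullam - Ubar‖ ≤
      2 * δ * γ + γ₁ + ξ₁ +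
        (2 * δ ^ 2 +
          ((δz / Real.sqrt (lam * μ)) * (δz * (κ + γtilde₁) + γtilde₁ / 2)
            + (γtilde₁ / (lam * μ)) *
                (γtilde₁ + δz * (1 + 2 * δz) * (κ + γtilde₁)))) * ‖h₀ - hmullam‖ := by
  -- nonnegativity
  have hκ0 : (0:ℝ) ≤ κ := le_trans (norm_nonneg _) hκ
  have hδz0 : (0:ℝ) ≤ δz := le_trans (norm_nonneg _) hδz
  have hδ0 : (0:ℝ) ≤ δ := le_trans (norm_nonneg _) hδ
  have hγ0 : (0:ℝ) ≤ γ := le_trans (norm_nonneg _) hγ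
  have hg0 : (0:ℝ) ≤ γtilde₁ := le_trans (norm_nonneg _) hγtilde₁
  -- abbreviations
  set ΔS : Hx →L[ℝ] Hz := Shat - S with hΔSdef
  set Z : Hz →L[ℝ] Hz := Szhat - Sz with hZdef
  set A : Hz →L[ℝ] Hz := Sz + μ • (1 : Hz →L[ℝ] Hz) with hAdef
  set A' : Hz →L[ℝ] Hz := Szhat + μ • (1 : Hz →L[ℝ] Hz) with hA'def
  set B : Hx →L[ℝ] Hx := Ring.inverse Tmullam with hBdef
  set B' : Hx →L[ℝ] Hx := Ring.inverse Tmullamhat with hB'def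
  set Δop : Hx →L[ℝ] Hx := Tμhat - Tμ with hΔopdef
  set h : Hx := h₀ - hmullam with hhdef
  set s : ℝ := Real.sqrt (lam * μ) with hsdef
  have hs : 0 < s := Real.sqrt_pos.mpr (by positivity)
  have hss : s ^ 2 = lam * μ := Real.sq_sqrt (by positivity)
  clear_value ΔS Z A A' B B' Δop h s
  -- coercivity of A and A'
  have hcA : ∀ u, μ * ‖u‖ ^ 2 ≤ ⟪A u, u⟫ := by
    intro u
    have h1 : 0 ≤ ⟪Sz u, u⟫ := by
      have := hSz.inner_nonneg_left u
      simpa using this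
    have h2 : ⟪A u, u⟫ = ⟪Sz u, u⟫ + μ * ⟪u, u⟫ := by
      rw [hAdef]
      simp [ContinuousLinearMap.add_apply, ContinuousLinearMap.smul_apply,
        inner_add_left, real_inner_smul_left]
    rw [h2, real_inner_self_eq_norm_sq]
    linarith
  have hcA' : ∀ u, μ * ‖u‖ ^ 2 ≤ ⟪A' u, u⟫ := by
    intro u
    have h1 : 0 ≤ ⟪Szhat u, u⟫ := by
      have := hSzhat.inner_nonneg_left u
      simpa using this
    have h2 : ⟪A' u, u⟫ = ⟪Szhat u, u⟫ + μ * ⟪u, u⟫ := by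
      rw [hA'def]
      simp [ContinuousLinearMap.add_apply, ContinuousLinearMap.smul_apply,
        inner_add_left, real_inner_smul_left]
    rw [h2, real_inner_self_eq_norm_sq]
    linarith
  have hAunit : IsUnit A := bahadur_coercive_isUnit A μ hμ hcA
  have hA'unit : IsUnit A' := bahadur_coercive_isUnit A' μ hμ hcA'
  have hRA : Rz * A = 1 := by rw [hRz]; exact Ring.inverse_mul_cancel A hAunit
  have hAR : A * Rz = 1 := by rw [hRz]; exact Ring.mul_inverse_cancel A hAunit
  have hR'A' : Rzhat * A' = 1 := by rw [hRzhat]; exact Ring.inverse_mul_cancel A' hA'unit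
  have hA'R' : A' * Rzhat = 1 := by rw [hRzhat]; exact Ring.mul_inverse_cancel A' hA'unit
  have hRnorm : ‖Rz‖ ≤ μ⁻¹ := by
    rw [hRz]; exact bahadur_ring_inverse_norm_le A hAunit μ hμ (bahadur_coercive_below A μ hcA)
  have hR'norm : ‖Rzhat‖ ≤ μ⁻¹ := by
    rw [hRzhat]
    exact bahadur_ring_inverse_norm_le A' hA'unit μ hμ (bahadur_coercive_below A' μ hcA')
  -- self-adjointness
  have hZsa : IsSelfAdjoint Z := by
    rw [hZdef]; exact hSzhat.isSelfAdjoint.sub hSz.isSelfAdjoint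
  have hAsa : IsSelfAdjoint A := by
    rw [hAdef]
    exact hSz.isSelfAdjoint.add (IsSelfAdjoint.smul (star_trivial μ) (IsSelfAdjoint.one _))
  have hRsa : IsSelfAdjoint Rz := by
    rw [hRz]
    show star _ = _
    rw [← Ring.inverse_star, hAsa.star_eq]
  have hRadj : ContinuousLinearMap.adjoint Rz = Rz := isSelfAdjoint_iff'.mp hRsa
  have hZadj : ContinuousLinearMap.adjoint Z = Z := isSelfAdjoint_iff'.mp hZsa
  -- quadratic positivity of Rz
  have hARz : ∀ w, A (Rz w) = w := by
    intro w
    rw [hRz]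
    exact bahadur_apply_ring_inverse_cancel A hAunit w
  have hRquad : ∀ w, μ * ‖Rz w‖ ^ 2 ≤ ⟪Rz w, w⟫ := by
    intro w
    have h1 := hcA (Rz w)
    rw [hARz w] at h1
    calc μ * ‖Rz w‖ ^ 2 ≤ ⟪w, Rz w⟫ := h1
    _ = ⟪Rz w, w⟫ := real_inner_comm _ _
  -- positivity of Tμ and coercivity of Tmullam
  have hTμquad : ∀ x, 0 ≤ ⟪Tμ x, x⟫ ∧ ⟪Tμ x, x⟫ = ⟪Rz (S x), S x⟫ := by
    intro x
    have h2 : ⟪Tμ x, x⟫ = ⟪Rz (S x), S x⟫ := by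
      rw [hTμ]
      calc ⟪(ContinuousLinearMap.adjoint S ∘L Rz ∘L S) x, x⟫
          = ⟪ContinuousLinearMap.adjoint S (Rz (S x)), x⟫ := rfl
      _ = ⟪Rz (S x), S x⟫ := ContinuousLinearMap.adjoint_inner_left _ _ _
    refine ⟨?_, h2⟩
    rw [h2]
    exact le_trans (by positivity) (hRquad (S x))
  have hcT : ∀ x, lam * ‖x‖ ^ 2 ≤ ⟪Tmullam x, x⟫ := by
    intro x
    have h2 : ⟪Tmullam x, x⟫ = ⟪Tμ x, x⟫ + lam * ⟪x, x⟫ := by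
      rw [h_Tmullam]
      simp [ContinuousLinearMap.add_apply, ContinuousLinearMap.smul_apply,
        inner_add_left, real_inner_smul_left]
    rw [h2, real_inner_self_eq_norm_sq]
    linarith [(hTμquad x).1]
  have hTunit : IsUnit Tmullam := bahadur_coercive_isUnit Tmullam lam hlam hcT
  have hTB : Tmullam * B = 1 := by rw [hBdef]; exact Ring.mul_inverse_cancel _ hTunit
  have hBT : B * Tmullam = 1 := by rw [hBdef]; exact Ring.inverse_mul_cancel _ hTunit
  have hBnorm : ‖B‖ ≤ lam⁻¹ := by
    rw [hBdef]
    exact bahadur_ring_inverse_norm_le _ hTunit lam hlam (bahadur_coercive_below _ lam hcT)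
  have hTsa : IsSelfAdjoint Tmullam := by
    have hTμsa : IsSelfAdjoint Tμ := by
      rw [isSelfAdjoint_iff', hTμ]
      rw [ContinuousLinearMap.adjoint_comp, ContinuousLinearMap.adjoint_comp,
        ContinuousLinearMap.adjoint_adjoint, hRadj]
      ext x
      rfl
    rw [h_Tmullam]
    exact hTμsa.add (IsSelfAdjoint.smul (star_trivial lam) (IsSelfAdjoint.one _))
  have hBsa : IsSelfAdjoint B := by
    rw [hBdef]
    show star _ = _
    rw [← Ring.inverse_star, hTsa.star_eq]
  have hBadj : ContinuousLinearMap.adjoint B = B := isSelfAdjoint_iff'.mp hBsa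
  -- the key bound ‖B ∘L adjoint S ∘L Rz‖ ≤ (2√(λμ))⁻¹
  have hTBv : ∀ w, Tmullam (B w) = w := by
    intro w
    rw [hBdef]
    exact bahadur_apply_ring_inverse_cancel _ hTunit w
  have hMnorm : ‖B ∘L ContinuousLinearMap.adjoint S ∘L Rz‖ ≤ (2*s)⁻¹ := by
    have hN : ∀ u, ‖(Rz ∘L S ∘L B) u‖ ≤ (2*s)⁻¹ * ‖u‖ := by
      intro u
      have h1 : μ * ‖Rz (S (B u))‖ ^ 2 ≤ ⟪Tμ (B u), B u⟫ := by
        rw [(hTμquad (B u)).2]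
        exact hRquad (S (B u))
      have h3 : ⟪Tμ (B u), B u⟫ ≤ (4*lam)⁻¹ * ‖u‖^2 := by
        set x := B u with hxdef
        have hxu : Tμ x + lam • x = u := by
          have := hTBv u
          rw [h_Tmullam] at this
          calc Tμ x + lam • x
              = (Tμ + lam • (1 : Hx →L[ℝ] Hx)) x := by
                simp [ContinuousLinearMap.add_apply, ContinuousLinearMap.smul_apply]
            _ = u := this
        have hexp : ‖u‖^2 = ‖Tμ x‖^2 + 2*(lam*⟪Tμ x, x⟫) + lam^2*‖x‖^2 := by
          rw [← hxu, norm_add_sq_real, real_inner_smul_right]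
          have : ‖lam • x‖^2 = lam^2 * ‖x‖^2 := by
            rw [norm_smul, mul_pow, Real.norm_eq_abs, sq_abs]
          rw [this]
        have hCS : ⟪Tμ x, x⟫ ≤ ‖Tμ x‖ * ‖x‖ := real_inner_le_norm _ _
        have hpos : 0 ≤ ⟪Tμ x, x⟫ := (hTμquad x).1
        rw [inv_mul_eq_div, le_div_iff₀ (by positivity)]
        nlinarith [sq_nonneg (‖Tμ x‖ - lam * ‖x‖),
          mul_nonneg hlam.le (sub_nonneg.mpr hCS)]
      have h4 : μ * ‖Rz (S (B u))‖ ^ 2 ≤ (4*lam)⁻¹ * ‖u‖^2 := le_trans h1 h3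
      have h6 : ‖Rz (S (B u))‖^2 ≤ ((2*s)⁻¹ * ‖u‖)^2 := by
        have hsne : s ≠ 0 := ne_of_gt hs
        have h4' : μ * ‖Rz (S (B u))‖^2 * (4*lam) ≤ ‖u‖^2 := by
          rw [inv_mul_eq_div, le_div_iff₀ (by positivity)] at h4
          exact h4
        have he : ((2*s)⁻¹ * ‖u‖)^2 = ‖u‖^2 / (4*(lam*μ)) := by
          rw [mul_pow, ← hss, inv_pow, show (2*s)^2 = 4*s^2 by ring, div_eq_mul_inv]
          ring
        rw [he, le_div_iff₀ (by positivity)]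
        nlinarith [h4']
      have h7 : ‖(Rz ∘L S ∘L B) u‖ = ‖Rz (S (B u))‖ := rfl
      rw [h7]
      calc ‖Rz (S (B u))‖ = Real.sqrt (‖Rz (S (B u))‖^2) :=
        (Real.sqrt_sq (norm_nonneg _)).symm
      _ ≤ Real.sqrt (((2*s)⁻¹ * ‖u‖)^2) := Real.sqrt_le_sqrt h6
      _ = (2*s)⁻¹ * ‖u‖ := Real.sqrt_sq (by positivity)
    have hNnorm : ‖Rz ∘L S ∘L B‖ ≤ (2*s)⁻¹ :=
      ContinuousLinearMap.opNorm_le_bound _ (by positivity) hN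
    have hadj : ContinuousLinearMap.adjoint (Rz ∘L S ∘L B)
        = B ∘L ContinuousLinearMap.adjoint S ∘L Rz := by
      rw [ContinuousLinearMap.adjoint_comp, ContinuousLinearMap.adjoint_comp, hRadj, hBadj]
      ext x
      rfl
    calc ‖B ∘L ContinuousLinearMap.adjoint S ∘L Rz‖
        = ‖ContinuousLinearMap.adjoint (Rz ∘L S ∘L B)‖ := by rw [hadj]
    _ = ‖Rz ∘L S ∘L B‖ := LinearIsometryEquiv.norm_map ContinuousLinearMap.adjoint _
    _ ≤ (2*s)⁻¹ := hNnorm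
  -- norms of Z-products
  have hRZ : ‖Rz * Z‖ ≤ δz := by
    rw [ContinuousLinearMap.mul_def]
    exact hδz
  have hZR : ‖Z * Rz‖ ≤ δz := by
    have h1 : ContinuousLinearMap.adjoint (Rz ∘L Z) = Z ∘L Rz := by
      rw [ContinuousLinearMap.adjoint_comp, hRadj, hZadj]
    calc ‖Z * Rz‖ = ‖Z ∘L Rz‖ := by rw [ContinuousLinearMap.mul_def]
    _ = ‖ContinuousLinearMap.adjoint (Rz ∘L Z)‖ := by rw [h1]
    _ = ‖Rz ∘L Z‖ := LinearIsometryEquiv.norm_map ContinuousLinearMap.adjoint _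
    _ ≤ δz := hδz
  -- Neumann for A'
  have hZRhalf : ‖Z * Rz‖ ≤ 1 / 2 := le_trans hZR hδz2
  have hVunit : IsUnit (1 + Z * Rz) := bahadur_neumann_isUnit _ hZRhalf
  set V : Hz →L[ℝ] Hz := Ring.inverse (1 + Z * Rz) with hVdef
  have hVnorm : ‖V‖ ≤ 2 := bahadur_neumann_inverse_norm _ hZRhalf
  have hUV : (1 + Z * Rz) * V = 1 := Ring.mul_inverse_cancel _ hVunit
  have hVU : V * (1 + Z * Rz) = 1 := Ring.inverse_mul_cancel _ hVunit
  clear_value V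
  have hA'_eq : A' = (1 + Z * Rz) * A := by
    have h1 : (1 + Z * Rz) * A = A + Z * (Rz * A) := by noncomm_ring
    rw [h1, hRA, mul_one, hAdef, hA'def, hZdef]
    abel
  have hR'_eq : Rzhat = Rz * V := by
    rw [hRzhat]
    apply bahadur_ring_inverse_eq
    · rw [hA'_eq]
      calc (1 + Z * Rz) * A * (Rz * V) = (1 + Z * Rz) * ((A * Rz) * V) := by noncomm_ring
      _ = 1 := by rw [hAR, one_mul, hUV]
    · rw [hA'_eq]
      calc Rz * V * ((1 + Z * Rz) * A) = Rz * (V * (1 + Z * Rz)) * A := by noncomm_ring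
      _ = 1 := by rw [hVU, mul_one, hRA]
  -- resolvent identities in Hz
  have hAA' : A - A' = -Z := by
    rw [hAdef, hA'def, hZdef]
    abel
  have hr1 : Rzhat - Rz = -(Rzhat * Z * Rz) := by
    calc Rzhat - Rz = Rzhat * (A * Rz) - (Rzhat * A') * Rz := by
          rw [hAR, hR'A', mul_one, one_mul]
    _ = Rzhat * (A - A') * Rz := by noncomm_ring
    _ = -(Rzhat * Z * Rz) := by rw [hAA']; noncomm_ring
  have hr1sym : Rzhat - Rz = -(Rz * Z * Rzhat) := by
    calc Rzhat - Rz = (Rz * A) * Rzhat - Rz * (A' * Rzhat) := by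
          rw [hRA, hA'R', mul_one, one_mul]
    _ = Rz * (A - A') * Rzhat := by noncomm_ring
    _ = -(Rz * Z * Rzhat) := by rw [hAA']; noncomm_ring
  have hr1' : Rz - Rzhat = Rzhat * Z * Rz := by
    rw [← neg_sub, hr1, neg_neg]
  have hr2 : Rzhat - Rz + Rz * Z * Rz = Rzhat * Z * Rz * Z * Rz := by
    calc Rzhat - Rz + Rz * Z * Rz = -(Rzhat * Z * Rz) + Rz * Z * Rz := by rw [hr1]
    _ = (Rz - Rzhat) * Z * Rz := by noncomm_ring
    _ = Rzhat * Z * Rz * Z * Rz := by rw [hr1']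
  have hR'alt : Rzhat = Rz - Rz * Z * Rzhat := by
    calc Rzhat = (Rzhat - Rz) + Rz := by abel
    _ = -(Rz * Z * Rzhat) + Rz := by rw [hr1sym]
    _ = Rz - Rz * Z * Rzhat := by abel
  have hr3 : Rzhat - Rz = -(Rz * Z * Rz) + (Rz * Z) * ((Rz * Z) * Rzhat) := by
    calc Rzhat - Rz = -(Rz * Z * Rzhat) := hr1sym
    _ = -(Rz * Z * (Rz - Rz * Z * Rzhat)) := by conv_lhs => rw [hR'alt]
    _ = -(Rz * Z * Rz) + (Rz * Z) * ((Rz * Z) * Rzhat) := by noncomm_ring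
  have hq1 : Rzhat - Rz - Rz * (Sz - Szhat) * Rz = Rzhat * Z * Rz * Z * Rz := by
    have hZS : Sz - Szhat = -Z := by rw [hZdef]; abel
    have h1 : Rzhat - Rz - Rz * (-Z) * Rz = Rzhat - Rz + Rz * Z * Rz := by noncomm_ring
    rw [hZS, h1, hr2]
  have hR'Rnorm : ‖Rzhat - Rz‖ ≤ μ⁻¹ * δz := by
    have h1 : Rzhat * Z * Rz = Rzhat * (Z * Rz) := by rw [mul_assoc]
    rw [hr1, norm_neg, h1]
    calc ‖Rzhat * (Z * Rz)‖ ≤ ‖Rzhat‖ * ‖Z * Rz‖ := norm_mul_le _ _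
    _ ≤ μ⁻¹ * δz := mul_le_mul hR'norm hZR (norm_nonneg _) (by positivity)
  -- Neumann for Tmullamhat
  have hBΔ : ‖B * Δop‖ ≤ δ := by
    rw [ContinuousLinearMap.mul_def]
    exact hδ
  have hBΔhalf : ‖B * Δop‖ ≤ 1 / 2 := le_trans hBΔ hδ2
  have hWunit : IsUnit (1 + B * Δop) := bahadur_neumann_isUnit _ hBΔhalf
  set W : Hx →L[ℝ] Hx := Ring.inverse (1 + B * Δop) with hWdef
  have hWnorm : ‖W‖ ≤ 2 := bahadur_neumann_inverse_norm _ hBΔhalf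
  have hWU : (1 + B * Δop) * W = 1 := Ring.mul_inverse_cancel _ hWunit
  have hUW : W * (1 + B * Δop) = 1 := Ring.inverse_mul_cancel _ hWunit
  clear_value W
  have hThat_eq : Tmullamhat = Tmullam * (1 + B * Δop) := by
    have h1 : Tmullam * (1 + B * Δop) = Tmullam + (Tmullam * B) * Δop := by noncomm_ring
    rw [h1, hTB, one_mul, h_Tmullam, h_Tmullamhat, hΔopdef]
    abel
  have hThatunit : IsUnit Tmullamhat := by
    rw [hThat_eq]
    exact hTunit.mul hWunit
  have hB'_eq : B' = W * B := by
    rw [hB'def, hThat_eq]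
    apply bahadur_ring_inverse_eq
    · calc Tmullam * (1 + B * Δop) * (W * B) = Tmullam * ((1 + B * Δop) * W) * B := by
            noncomm_ring
      _ = 1 := by rw [hWU, mul_one, hTB]
    · calc W * B * (Tmullam * (1 + B * Δop)) = W * (B * Tmullam) * (1 + B * Δop) := by
            noncomm_ring
      _ = 1 := by rw [hBT, mul_one, hUW]
  have hB'Δnorm : ‖B' * Δop‖ ≤ 2 * δ := by
    have h1 : B' * Δop = W * (B * Δop) := by rw [hB'_eq, mul_assoc]
    rw [h1]
    calc ‖W * (B * Δop)‖ ≤ ‖W‖ * ‖B * Δop‖ := norm_mul_le _ _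
    _ ≤ 2 * δ := mul_le_mul hWnorm hBΔ (norm_nonneg _) (by norm_num)
  have hBdiff : B - B' = B' * Δop * B := by
    have h1 : B' * Tmullamhat = 1 := by
      rw [hB'def]
      exact Ring.inverse_mul_cancel _ hThatunit
    have h2 : Tmullamhat - Tmullam = Δop := by
      rw [h_Tmullam, h_Tmullamhat, hΔopdef]
      abel
    calc B - B' = (B' * Tmullamhat) * B - B' * (Tmullam * B) := by rw [h1, hTB, mul_one, one_mul]
    _ = B' * (Tmullamhat - Tmullam) * B := by noncomm_ring
    _ = B' * Δop * B := by rw [h2]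
  -- expansion of Tμhat
  have hSh : Shat = S + ΔS := by rw [hΔSdef]; abel
  have hadjsum : ContinuousLinearMap.adjoint Shat
      = ContinuousLinearMap.adjoint S + ContinuousLinearMap.adjoint ΔS := by
    rw [hSh, map_add]
  have hTμhat_exp : Tμhat
      = ContinuousLinearMap.adjoint S ∘L (Rzhat ∘L S)
        + ContinuousLinearMap.adjoint S ∘L (Rzhat ∘L ΔS)
        + ContinuousLinearMap.adjoint ΔS ∘L (Rzhat ∘L S)
        + ContinuousLinearMap.adjoint ΔS ∘L (Rzhat ∘L ΔS) := by
    rw [hTμhat, hadjsum, hSh]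
    ext x
    simp only [ContinuousLinearMap.comp_apply, ContinuousLinearMap.add_apply, map_add]
    abel
  set Dop : Hx →L[ℝ] Hx :=
    ContinuousLinearMap.adjoint S ∘L Rz ∘L ΔS + ContinuousLinearMap.adjoint ΔS ∘L Rz ∘L S
      + ContinuousLinearMap.adjoint S ∘L Rz ∘L (Sz - Szhat) ∘L Rz ∘L S with hDopdef
  clear_value Dop
  have hΔD : Δop - Dop
      = ContinuousLinearMap.adjoint S ∘L ((Rzhat * Z * Rz * Z * Rz) ∘L S)
        + ContinuousLinearMap.adjoint S ∘L ((Rzhat - Rz) ∘L ΔS)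
        + ContinuousLinearMap.adjoint ΔS ∘L ((Rzhat - Rz) ∘L S)
        + ContinuousLinearMap.adjoint ΔS ∘L (Rzhat ∘L ΔS) := by
    have e1 : ContinuousLinearMap.adjoint S ∘L ((Rzhat * Z * Rz * Z * Rz) ∘L S)
        = ContinuousLinearMap.adjoint S ∘L (Rzhat ∘L S)
          - ContinuousLinearMap.adjoint S ∘L (Rz ∘L S)
          - ContinuousLinearMap.adjoint S ∘L ((Rz * (Sz - Szhat) * Rz) ∘L S) := by
      rw [← hq1, bahadur_sand_sub, bahadur_sand_sub]
    have e2 : ContinuousLinearMap.adjoint S ∘L ((Rzhat - Rz) ∘L ΔS)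
        = ContinuousLinearMap.adjoint S ∘L (Rzhat ∘L ΔS)
          - ContinuousLinearMap.adjoint S ∘L (Rz ∘L ΔS) := bahadur_sand_sub _ _ _ _
    have e3 : ContinuousLinearMap.adjoint ΔS ∘L ((Rzhat - Rz) ∘L S)
        = ContinuousLinearMap.adjoint ΔS ∘L (Rzhat ∘L S)
          - ContinuousLinearMap.adjoint ΔS ∘L (Rz ∘L S) := bahadur_sand_sub _ _ _ _
    have eD3 : ContinuousLinearMap.adjoint S ∘L (Rz ∘L ((Sz - Szhat) ∘L (Rz ∘L S)))
        = ContinuousLinearMap.adjoint S ∘L ((Rz * (Sz - Szhat) * Rz) ∘L S) := by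
      ext x
      rfl
    rw [hΔopdef, hDopdef, hTμhat_exp, hTμ, e1, e2, e3]
    rw [show ContinuousLinearMap.adjoint S ∘L Rz ∘L (Sz - Szhat) ∘L Rz ∘L S
        = ContinuousLinearMap.adjoint S ∘L ((Rz * (Sz - Szhat) * Rz) ∘L S) from eD3]
    abel
  -- basic vector identities
  have hTh : Tmullam hmullam = Tμ h₀ := by
    rw [h_hmullam, hBdef]
    exact bahadur_apply_ring_inverse_cancel _ hTunit _
  have hlamh : lam • hmullam = Tμ h := by
    have e1 : Tmullam hmullam = Tμ hmullam + lam • hmullam := by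
      rw [h_Tmullam]; rfl
    have e2 : Tμ h = Tμ h₀ - Tμ hmullam := by rw [hhdef, map_sub]
    rw [e2, ← hTh, e1]
    abel
  have hI1 : hhat - hmullam
      = B' (Δop h) + B' ((ContinuousLinearMap.adjoint Shat ∘L Rzhat) e) := by
    have e0 : (ContinuousLinearMap.adjoint Shat ∘L Rzhat) (Shat h₀ + e)
        = Tμhat h₀ + (ContinuousLinearMap.adjoint Shat ∘L Rzhat) e := by
      rw [map_add]
      congr 1
      rw [hTμhat]
      rfl
    have e3 : B' (Tmullamhat hmullam) = hmullam := by
      rw [hB'def]; exact bahadur_ring_inverse_apply_cancel _ hThatunit _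
    have e5 : Tμhat h₀ - Tmullamhat hmullam = Δop h := by
      have e6 : Tmullamhat hmullam = Tμhat hmullam + lam • hmullam := by
        rw [h_Tmullamhat]; rfl
      have e7 : Δop h = Tμhat h - Tμ h := by rw [hΔopdef]; rfl
      have e8 : Tμhat h = Tμhat h₀ - Tμhat hmullam := by rw [hhdef, map_sub]
      rw [e6, hlamh, e7, e8]
      abel
    calc hhat - hmullam
        = B' (Tμhat h₀) + B' ((ContinuousLinearMap.adjoint Shat ∘L Rzhat) e)
          - B' (Tmullamhat hmullam) := by
          rw [hhhat, e0, map_add]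
          rw [e3]
    _ = B' (Tμhat h₀ - Tmullamhat hmullam)
          + B' ((ContinuousLinearMap.adjoint Shat ∘L Rzhat) e) := by
          rw [map_sub]; abel
    _ = B' (Δop h) + B' ((ContinuousLinearMap.adjoint Shat ∘L Rzhat) e) := by rw [e5]
  have hB'v : ∀ v, B' v = B v - (B' * Δop) (B v) := by
    intro v
    have h2 : B v - B' v = (B' * Δop) (B v) := by
      rw [← ContinuousLinearMap.sub_apply, hBdiff, ContinuousLinearMap.mul_apply]
    calc B' v = B v - (B v - B' v) := by abel
    _ = B v - (B' * Δop) (B v) := by rw [h2]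
  have hBw2 : (B ∘L ContinuousLinearMap.adjoint Shat ∘L Rzhat) e
      = B ((ContinuousLinearMap.adjoint Shat ∘L Rzhat) e) := rfl
  have hw2 : B ((ContinuousLinearMap.adjoint Shat ∘L Rzhat) e)
      = (B ∘L ContinuousLinearMap.adjoint ΔS ∘L Rzhat) e
        + (B ∘L ContinuousLinearMap.adjoint S ∘L (Rzhat - Rz)) e
        + (B ∘L ContinuousLinearMap.adjoint S ∘L Rz) e := by
    have e1 : (ContinuousLinearMap.adjoint Shat ∘L Rzhat) e
        = (ContinuousLinearMap.adjoint ΔS ∘L Rzhat) e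
          + ((ContinuousLinearMap.adjoint S ∘L (Rzhat - Rz)) e
             + (ContinuousLinearMap.adjoint S ∘L Rz) e) := by
      rw [hadjsum]
      simp only [ContinuousLinearMap.comp_apply, ContinuousLinearMap.add_apply,
        ContinuousLinearMap.sub_apply, map_sub]
      abel
    rw [e1, map_add, map_add]
    simp only [ContinuousLinearMap.comp_apply]
    abel
  have hB'w2 : B' ((ContinuousLinearMap.adjoint Shat ∘L Rzhat) e)
      = (B ∘L ContinuousLinearMap.adjoint ΔS ∘L Rzhat) e
        + (B ∘L ContinuousLinearMap.adjoint S ∘L (Rzhat - Rz)) e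
        + (B ∘L ContinuousLinearMap.adjoint S ∘L Rz) e
        - (B' * Δop) ((B ∘L ContinuousLinearMap.adjoint Shat ∘L Rzhat) e) := by
    calc B' ((ContinuousLinearMap.adjoint Shat ∘L Rzhat) e)
        = B ((ContinuousLinearMap.adjoint Shat ∘L Rzhat) e)
          - (B' * Δop) (B ((ContinuousLinearMap.adjoint Shat ∘L Rzhat) e)) := hB'v _
    _ = _ := by
        nth_rewrite 1 [hw2]
        rw [← hBw2]
  have hkey : hhat - hmullam - Ubar
      = B ((Δop - Dop) h) - (B' * Δop) ((B * Δop) h)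
        + ((B ∘L ContinuousLinearMap.adjoint ΔS ∘L Rzhat) e
           + (B ∘L ContinuousLinearMap.adjoint S ∘L (Rzhat - Rz)) e
           - (B' * Δop) ((B ∘L ContinuousLinearMap.adjoint Shat ∘L Rzhat) e)) := by
    have hsub : B ((Δop - Dop) h) = B (Δop h) - B (Dop h) := by
      have h9 : (Δop - Dop) h = Δop h - Dop h := rfl
      rw [h9, map_sub]
    have hBΔh : (B * Δop) h = B (Δop h) := rfl
    rw [hI1, hUbar, hsub, hBΔh, hB'v (Δop h), hB'w2]
    abel
  -- adjoint norms
  have hSadjn : ‖ContinuousLinearMap.adjoint S‖ ≤ κ := by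
    calc ‖ContinuousLinearMap.adjoint S‖ = ‖S‖ :=
      LinearIsometryEquiv.norm_map ContinuousLinearMap.adjoint S
    _ ≤ κ := hκ
  have hΔSadjn : ‖ContinuousLinearMap.adjoint ΔS‖ ≤ γtilde₁ := by
    calc ‖ContinuousLinearMap.adjoint ΔS‖ = ‖ΔS‖ :=
      LinearIsometryEquiv.norm_map ContinuousLinearMap.adjoint ΔS
    _ ≤ γtilde₁ := hγtilde₁
  -- bounds on the four pieces of B ∘L (Δop - Dop)
  have hG1 : ‖B ∘L (ContinuousLinearMap.adjoint S ∘L ((Rzhat * Z * Rz * Z * Rz) ∘L S))‖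
      ≤ (2*s)⁻¹ * (2*δz*δz) * κ := by
    have heq : B ∘L (ContinuousLinearMap.adjoint S ∘L ((Rzhat * Z * Rz * Z * Rz) ∘L S))
        = (B ∘L ContinuousLinearMap.adjoint S ∘L Rz) ∘L ((V * (Z * Rz) * (Z * Rz)) ∘L S) := by
      rw [hR'_eq]
      ext x
      rfl
    rw [heq]
    refine le_trans (bahadur_norm_comp3_le _ _ _) ?_
    have h1 : ‖V * (Z * Rz) * (Z * Rz)‖ ≤ 2*δz*δz :=
      le_trans (bahadur_norm_mul3_le _ _ _)
        (mul_le_mul (mul_le_mul hVnorm hZR (norm_nonneg _) (by norm_num)) hZR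
          (norm_nonneg _) (by positivity))
    exact mul_le_mul (mul_le_mul hMnorm h1 (norm_nonneg _) (by positivity)) hκ
      (norm_nonneg _) (by positivity)
  have hG2 : ‖B ∘L (ContinuousLinearMap.adjoint S ∘L ((Rzhat - Rz) ∘L ΔS))‖
      ≤ (2*s)⁻¹ * δz * γtilde₁ + lam⁻¹ * κ * (δz*(δz*μ⁻¹)*γtilde₁) := by
    have hsplit2 : B ∘L (ContinuousLinearMap.adjoint S ∘L ((Rzhat - Rz) ∘L ΔS))
        = -((B ∘L ContinuousLinearMap.adjoint S ∘L Rz) ∘L ((Z * Rz) ∘L ΔS))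
          + B ∘L (ContinuousLinearMap.adjoint S
              ∘L (((Rz * Z) * ((Rz * Z) * Rzhat)) ∘L ΔS)) := by
      rw [hr3]
      ext x
      simp only [ContinuousLinearMap.comp_apply, ContinuousLinearMap.add_apply,
        ContinuousLinearMap.neg_apply, ContinuousLinearMap.mul_apply, map_add, map_neg]
    rw [hsplit2]
    refine le_trans (norm_add_le _ _) ?_
    have hp1 : ‖-((B ∘L ContinuousLinearMap.adjoint S ∘L Rz) ∘L ((Z * Rz) ∘L ΔS))‖
        ≤ (2*s)⁻¹ * δz * γtilde₁ := by
      rw [norm_neg]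
      refine le_trans (bahadur_norm_comp3_le _ _ _) ?_
      exact mul_le_mul (mul_le_mul hMnorm hZR (norm_nonneg _) (by positivity)) hγtilde₁
        (norm_nonneg _) (by positivity)
    have hp2 : ‖B ∘L (ContinuousLinearMap.adjoint S
          ∘L (((Rz * Z) * ((Rz * Z) * Rzhat)) ∘L ΔS))‖
        ≤ lam⁻¹ * κ * (δz*(δz*μ⁻¹)*γtilde₁) := by
      refine le_trans (bahadur_norm_comp3_le _ _ _) ?_
      have h2 : ‖(Rz * Z) * ((Rz * Z) * Rzhat)‖ ≤ δz * (δz*μ⁻¹) :=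
        le_trans (norm_mul_le _ _)
          (mul_le_mul hRZ (le_trans (norm_mul_le _ _)
            (mul_le_mul hRZ hR'norm (norm_nonneg _) hδz0)) (norm_nonneg _) hδz0)
      have h3 : ‖((Rz * Z) * ((Rz * Z) * Rzhat)) ∘L ΔS‖ ≤ δz*(δz*μ⁻¹)*γtilde₁ :=
        le_trans (ContinuousLinearMap.opNorm_comp_le _ _)
          (mul_le_mul h2 hγtilde₁ (norm_nonneg _) (by positivity))
      exact mul_le_mul (mul_le_mul hBnorm hSadjn (norm_nonneg _) (by positivity)) h3
        (norm_nonneg _) (by positivity)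
    exact add_le_add hp1 hp2
  have hG3 : ‖B ∘L (ContinuousLinearMap.adjoint ΔS ∘L ((Rzhat - Rz) ∘L S))‖
      ≤ lam⁻¹ * γtilde₁ * ((μ⁻¹*δz)*κ) := by
    refine le_trans (bahadur_norm_comp3_le _ _ _) ?_
    have h3 : ‖(Rzhat - Rz) ∘L S‖ ≤ (μ⁻¹*δz)*κ :=
      le_trans (ContinuousLinearMap.opNorm_comp_le _ _)
        (mul_le_mul hR'Rnorm hκ (norm_nonneg _) (by positivity))
    exact mul_le_mul (mul_le_mul hBnorm hΔSadjn (norm_nonneg _) (by positivity)) h3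
      (norm_nonneg _) (by positivity)
  have hG4 : ‖B ∘L (ContinuousLinearMap.adjoint ΔS ∘L (Rzhat ∘L ΔS))‖
      ≤ lam⁻¹ * γtilde₁ * (μ⁻¹*γtilde₁) := by
    refine le_trans (bahadur_norm_comp3_le _ _ _) ?_
    have h3 : ‖Rzhat ∘L ΔS‖ ≤ μ⁻¹*γtilde₁ :=
      le_trans (ContinuousLinearMap.opNorm_comp_le _ _)
        (mul_le_mul hR'norm hγtilde₁ (norm_nonneg _) (by positivity))
    exact mul_le_mul (mul_le_mul hBnorm hΔSadjn (norm_nonneg _) (by positivity)) h3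
      (norm_nonneg _) (by positivity)
  have hBsplit : B ∘L (Δop - Dop)
      = B ∘L (ContinuousLinearMap.adjoint S ∘L ((Rzhat * Z * Rz * Z * Rz) ∘L S))
        + B ∘L (ContinuousLinearMap.adjoint S ∘L ((Rzhat - Rz) ∘L ΔS))
        + B ∘L (ContinuousLinearMap.adjoint ΔS ∘L ((Rzhat - Rz) ∘L S))
        + B ∘L (ContinuousLinearMap.adjoint ΔS ∘L (Rzhat ∘L ΔS)) := by
    rw [hΔD]
    ext x
    simp only [ContinuousLinearMap.comp_apply, ContinuousLinearMap.add_apply, map_add]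
  have hCop : ‖B ∘L (Δop - Dop)‖
      ≤ (2*s)⁻¹ * (2*δz*δz) * κ
        + ((2*s)⁻¹ * δz * γtilde₁ + lam⁻¹ * κ * (δz*(δz*μ⁻¹)*γtilde₁))
        + lam⁻¹ * γtilde₁ * ((μ⁻¹*δz)*κ)
        + lam⁻¹ * γtilde₁ * (μ⁻¹*γtilde₁) := by
    rw [hBsplit]
    refine le_trans (norm_add_le _ _) (add_le_add (le_trans (norm_add_le _ _)
      (add_le_add (le_trans (norm_add_le _ _) (add_le_add hG1 hG2)) hG3)) hG4)
  have hX1 : ‖B ((Δop - Dop) h)‖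
      ≤ ((2*s)⁻¹ * (2*δz*δz) * κ
        + ((2*s)⁻¹ * δz * γtilde₁ + lam⁻¹ * κ * (δz*(δz*μ⁻¹)*γtilde₁))
        + lam⁻¹ * γtilde₁ * ((μ⁻¹*δz)*κ)
        + lam⁻¹ * γtilde₁ * (μ⁻¹*γtilde₁)) * ‖h‖ := by
    have h9 : B ((Δop - Dop) h) = (B ∘L (Δop - Dop)) h := rfl
    rw [h9]
    exact le_trans (ContinuousLinearMap.le_opNorm _ _)
      (mul_le_mul_of_nonneg_right hCop (norm_nonneg _))
  have hX2 : ‖(B' * Δop) ((B * Δop) h)‖ ≤ 2*δ*(δ*‖h‖) := by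
    refine le_trans (ContinuousLinearMap.le_opNorm _ _) ?_
    have hv : ‖(B * Δop) h‖ ≤ δ * ‖h‖ :=
      le_trans (ContinuousLinearMap.le_opNorm _ _)
        (mul_le_mul_of_nonneg_right hBΔ (norm_nonneg _))
    exact mul_le_mul hB'Δnorm hv (norm_nonneg _) (by positivity)
  have hX3 : ‖(B' * Δop) ((B ∘L ContinuousLinearMap.adjoint Shat ∘L Rzhat) e)‖ ≤ 2*δ*γ := by
    refine le_trans (ContinuousLinearMap.le_opNorm _ _) ?_
    exact mul_le_mul hB'Δnorm hγ (norm_nonneg _) (by positivity)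
  -- final assembly
  have htotal : ‖hhat - hmullam - Ubar‖
      ≤ ((2*s)⁻¹ * (2*δz*δz) * κ
        + ((2*s)⁻¹ * δz * γtilde₁ + lam⁻¹ * κ * (δz*(δz*μ⁻¹)*γtilde₁))
        + lam⁻¹ * γtilde₁ * ((μ⁻¹*δz)*κ)
        + lam⁻¹ * γtilde₁ * (μ⁻¹*γtilde₁)) * ‖h‖
        + 2*δ*(δ*‖h‖) + (γ₁ + ξ₁ + 2*δ*γ) := by
    rw [hkey]
    refine le_trans (norm_add_le _ _) ?_
    have ha : ‖B ((Δop - Dop) h) - (B' * Δop) ((B * Δop) h)‖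
        ≤ ‖B ((Δop - Dop) h)‖ + ‖(B' * Δop) ((B * Δop) h)‖ := norm_sub_le _ _
    have hb : ‖(B ∘L ContinuousLinearMap.adjoint ΔS ∘L Rzhat) e
          + (B ∘L ContinuousLinearMap.adjoint S ∘L (Rzhat - Rz)) e
          - (B' * Δop) ((B ∘L ContinuousLinearMap.adjoint Shat ∘L Rzhat) e)‖
        ≤ ‖(B ∘L ContinuousLinearMap.adjoint ΔS ∘L Rzhat) e‖
          + ‖(B ∘L ContinuousLinearMap.adjoint S ∘L (Rzhat - Rz)) e‖
          + ‖(B' * Δop) ((B ∘L ContinuousLinearMap.adjoint Shat ∘L Rzhat) e)‖ :=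
      le_trans (norm_sub_le _ _) (add_le_add_left (norm_add_le _ _) _)
    have hc := add_le_add (le_trans ha (add_le_add hX1 hX2))
      (le_trans hb (add_le_add (add_le_add hγ₁ hξ₁) hX3))
    linarith
  have hscalar : (2*s)⁻¹ * (2*δz*δz) * κ
        + ((2*s)⁻¹ * δz * γtilde₁ + lam⁻¹ * κ * (δz*(δz*μ⁻¹)*γtilde₁))
        + lam⁻¹ * γtilde₁ * ((μ⁻¹*δz)*κ)
        + lam⁻¹ * γtilde₁ * (μ⁻¹*γtilde₁)
      ≤ δz / s * (δz*(κ+γtilde₁) + γtilde₁/2)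
        + γtilde₁ / (lam*μ) * (γtilde₁ + δz*(1+2*δz)*(κ+γtilde₁)) :=
    bahadur_scalar κ γtilde₁ δz lam μ s hκ0 hg0 hδz0 hlam hμ hs hss
  have hmono := mul_le_mul_of_nonneg_right hscalar (norm_nonneg h)
  have hexpand : (2 * δ ^ 2
        + (δz / s * (δz * (κ + γtilde₁) + γtilde₁ / 2)
          + γtilde₁ / (lam * μ) * (γtilde₁ + δz * (1 + 2 * δz) * (κ + γtilde₁)))) * ‖h‖
      = 2*δ*(δ*‖h‖)
        + (δz / s * (δz*(κ+γtilde₁) + γtilde₁/2)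
          + γtilde₁ / (lam*μ) * (γtilde₁ + δz*(1+2*δz)*(κ+γtilde₁))) * ‖h‖ := by
    ring
  linarith
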